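/- For all α, θ ∈ ℝ, the deformed generator applied to the exponential of the energy satisfies the exact identity L̄_α(e^{θG})(x) = γ e^{θG(x)} [ d(θ(T_1+T_n) + 2α) + (θ²T_1 − (1−2α)θ − α(1−α)/T_1)|r_1|² + (θ²T_n − (1−2α)θ − α(1−α)/T_n)|r_n|² ] for every x = (p,q,r) ∈ X. -/

import Mathlib

open scoped BigOperators
open MeasureTheory

noncomputable section

namespace EP

/-- `d`-dimensional vectors. -/
abbrev Vec (d : ℕ) := Fin d → ℝ

/-- The phase space `X = (ℝ^d)^n × (ℝ^d)^n × (ℝ^d × ℝ^d)`,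
coordinates `x = (p, q, (r₁, rₙ))`. -/
abbrev Phase (d n : ℕ) := (Fin n → Vec d) × (Fin n → Vec d) × (Vec d × Vec d)

/-- Euclidean dot product on `ℝ^d`. -/
def dotp {d : ℕ} (a b : Vec d) : ℝ := ∑ j, a j * b j

/-- 1-based access to an `n`-tuple of vectors (defaults to `0` out of range;
all uses below are in range). -/
def nth {d n : ℕ} (v : Fin n → Vec d) (i : ℕ) : Vec d :=
  if h : 1 ≤ i ∧ i ≤ n then v ⟨i - 1, by omega⟩ else 0

/-- The coordinate direction `j` of the `i`-th (1-based) vector in `(ℝ^d)^n`. -/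
def basisQ (d n : ℕ) (i : ℕ) (j : Fin d) : Fin n → Vec d :=
  if h : 1 ≤ i ∧ i ≤ n then Pi.single (⟨i - 1, by omega⟩ : Fin n) (Pi.single j 1) else 0

/-- Coordinate direction in `X`: component `j` of `p_i`. -/
def eP (d n : ℕ) (i : ℕ) (j : Fin d) : Phase d n := (basisQ d n i j, 0, 0, 0)
/-- Coordinate direction in `X`: component `j` of `q_i`. -/
def eQ (d n : ℕ) (i : ℕ) (j : Fin d) : Phase d n := (0, basisQ d n i j, 0, 0)
/-- Coordinate direction in `X`: component `j` of `r₁`. -/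
def eR1 (d n : ℕ) (j : Fin d) : Phase d n := (0, 0, Pi.single j 1, 0)
/-- Coordinate direction in `X`: component `j` of `rₙ`. -/
def eRn (d n : ℕ) (j : Fin d) : Phase d n := (0, 0, 0, Pi.single j 1)

/-- First-order partial derivative of `f` in direction `v` at `x`. -/
def pd {d n : ℕ} (f : Phase d n → ℝ) (v x : Phase d n) : ℝ := fderiv ℝ f x v

/-- Second-order partial derivative of `f` in direction `v` at `x`. -/
def pd2 {d n : ℕ} (f : Phase d n → ℝ) (v x : Phase d n) : ℝ :=
  fderiv ℝ (fun y => fderiv ℝ f y v) x v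

/-- The potential `V(q) = Σ_{i=1}^n U¹(q_i) + Σ_{i=1}^{n-1} U²(q_i - q_{i+1})`. -/
def Vpot (d n : ℕ) (U1 U2 : Vec d → ℝ) (q : Fin n → Vec d) : ℝ :=
  (∑ i ∈ Finset.Icc 1 n, U1 (nth q i)) +
  (∑ i ∈ Finset.Icc 1 (n - 1), U2 (nth q i - nth q (i + 1)))

/-- `L₀ f = γ(T₁ Δ_{r₁} f + Tₙ Δ_{rₙ} f - r₁·∇_{r₁} f - rₙ·∇_{rₙ} f)`. -/
def gen0 (d n : ℕ) (ga T1 Tn : ℝ) (f : Phase d n → ℝ) (x : Phase d n) : ℝ :=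
  ga * (T1 * ∑ j, pd2 f (eR1 d n j) x + Tn * ∑ j, pd2 f (eRn d n j) x
      - ∑ j, x.2.2.1 j * pd f (eR1 d n j) x
      - ∑ j, x.2.2.2 j * pd f (eRn d n j) x)

/-- The first-order part
`L₁ f = λ(p₁·∇_{r₁} f + pₙ·∇_{rₙ} f - r₁·∇_{p₁} f - rₙ·∇_{pₙ} f)
  + (Σ p_i·∇_{q_i} f - Σ ∇_{q_i}V·∇_{p_i} f)`. -/
def gen1 (d n : ℕ) (U1 U2 : Vec d → ℝ) (lam : ℝ) (f : Phase d n → ℝ) (x : Phase d n) : ℝ :=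
  lam * ((∑ j, nth x.1 1 j * pd f (eR1 d n j) x)
       + (∑ j, nth x.1 n j * pd f (eRn d n j) x)
       - (∑ j, x.2.2.1 j * pd f (eP d n 1 j) x)
       - (∑ j, x.2.2.2 j * pd f (eP d n n j) x))
  + ((∑ i ∈ Finset.Icc 1 n, ∑ j, nth x.1 i j * pd f (eQ d n i j) x)
   - (∑ i ∈ Finset.Icc 1 n, ∑ j,
       fderiv ℝ (Vpot d n U1 U2) x.2.1 (basisQ d n i j) * pd f (eP d n i j) x))

/-- The generator `L = L₀ + L₁`. -/
def gen (d n : ℕ) (U1 U2 : Vec d → ℝ) (ga lam T1 Tn : ℝ)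
    (f : Phase d n → ℝ) (x : Phase d n) : ℝ :=
  gen0 d n ga T1 Tn f x + gen1 d n U1 U2 lam f x

/-- The formal adjoint `Lᵀ`. -/
def genT (d n : ℕ) (U1 U2 : Vec d → ℝ) (ga lam T1 Tn : ℝ)
    (g : Phase d n → ℝ) (x : Phase d n) : ℝ :=
  ga * (T1 * ∑ j, pd2 g (eR1 d n j) x + Tn * ∑ j, pd2 g (eRn d n j) x
      + ∑ j, x.2.2.1 j * pd g (eR1 d n j) x
      + ∑ j, x.2.2.2 j * pd g (eRn d n j) x
      + 2 * (d : ℝ) * g x)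
  - lam * ((∑ j, nth x.1 1 j * pd g (eR1 d n j) x)
         + (∑ j, nth x.1 n j * pd g (eRn d n j) x)
         - (∑ j, x.2.2.1 j * pd g (eP d n 1 j) x)
         - (∑ j, x.2.2.2 j * pd g (eP d n n j) x))
  - ((∑ i ∈ Finset.Icc 1 n, ∑ j, nth x.1 i j * pd g (eQ d n i j) x)
   - (∑ i ∈ Finset.Icc 1 n, ∑ j,
       fderiv ℝ (Vpot d n U1 U2) x.2.1 (basisQ d n i j) * pd g (eP d n i j) x))

/-- The heat flows `Φ_i`, `0 ≤ i ≤ n`. -/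
def flow (d n : ℕ) (U2 : Vec d → ℝ) (lam : ℝ) (i : ℕ) (x : Phase d n) : ℝ :=
  if i = 0 then - lam * dotp x.2.2.1 (nth x.1 1)
  else if i = n then lam * dotp x.2.2.2 (nth x.1 n)
  else ∑ j, ((nth x.1 i j + nth x.1 (i + 1) j) / 2) *
        fderiv ℝ U2 (nth x.2.1 i - nth x.2.1 (i + 1)) (Pi.single j 1)

/-- The entropy productions `σ_i = (1/Tₙ - 1/T₁) Φ_i`. -/
def sigmaF (d n : ℕ) (U2 : Vec d → ℝ) (lam T1 Tn : ℝ) (i : ℕ) (x : Phase d n) : ℝ :=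
  (1 / Tn - 1 / T1) * flow d n U2 lam i x

/-- The local energies `H_i`, `1 ≤ i ≤ n`. -/
def locH (d n : ℕ) (U1 U2 : Vec d → ℝ) (i : ℕ) (x : Phase d n) : ℝ :=
  dotp (nth x.1 i) (nth x.1 i) / 2 + U1 (nth x.2.1 i)
  + (if 2 ≤ i then U2 (nth x.2.1 (i - 1) - nth x.2.1 i) else 0) / 2
  + (if i < n then U2 (nth x.2.1 i - nth x.2.1 (i + 1)) else 0) / 2

/-- `R_i = (1/T₁)(|r₁|²/2 + Σ_{k=1}^i H_k) + (1/Tₙ)(Σ_{k=i+1}^n H_k + |rₙ|²/2)`. -/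
def Rfun (d n : ℕ) (U1 U2 : Vec d → ℝ) (T1 Tn : ℝ) (i : ℕ) (x : Phase d n) : ℝ :=
  (1 / T1) * (dotp x.2.2.1 x.2.2.1 / 2 + ∑ k ∈ Finset.Icc 1 i, locH d n U1 U2 k x)
  + (1 / Tn) * ((∑ k ∈ Finset.Icc (i + 1) n, locH d n U1 U2 k x) + dotp x.2.2.2 x.2.2.2 / 2)

/-- The total energy `G(p,q,r) = |r₁|²/2 + |rₙ|²/2 + Σ|p_i|²/2 + V(q)`. -/
def Gfun (d n : ℕ) (U1 U2 : Vec d → ℝ) (x : Phase d n) : ℝ :=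
  dotp x.2.2.1 x.2.2.1 / 2 + dotp x.2.2.2 x.2.2.2 / 2
  + (∑ i : Fin n, dotp (x.1 i) (x.1 i) / 2) + Vpot d n U1 U2 x.2.1

/-- The chain energy `H_S(p,q) = Σ|p_i|²/2 + V(q)`. -/
def HS (d n : ℕ) (U1 U2 : Vec d → ℝ) (x : Phase d n) : ℝ :=
  (∑ i : Fin n, dotp (x.1 i) (x.1 i) / 2) + Vpot d n U1 U2 x.2.1

/-- Momentum reversal `(Jf)(p,q,r) = f(-p,q,r)`. -/
def Jop {d n : ℕ} (f : Phase d n → ℝ) : Phase d n → ℝ := fun x => f (-x.1, x.2)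

/-- `L̃_α f = L f + 2αγ (r₁·∇_{r₁} f + rₙ·∇_{rₙ} f)`. -/
def genTilde (d n : ℕ) (U1 U2 : Vec d → ℝ) (ga lam T1 Tn al : ℝ)
    (f : Phase d n → ℝ) (x : Phase d n) : ℝ :=
  gen d n U1 U2 ga lam T1 Tn f x
  + 2 * al * ga * ((∑ j, x.2.2.1 j * pd f (eR1 d n j) x)
                 + (∑ j, x.2.2.2 j * pd f (eRn d n j) x))

/-- `L̄_α f = L̃_α f - ((α-α²)γ(|r₁|²/T₁ + |rₙ|²/Tₙ) - 2dαγ) f`. -/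
def genBar (d n : ℕ) (U1 U2 : Vec d → ℝ) (ga lam T1 Tn al : ℝ)
    (f : Phase d n → ℝ) (x : Phase d n) : ℝ :=
  genTilde d n U1 U2 ga lam T1 Tn al f x
  - ((al - al ^ 2) * ga * (dotp x.2.2.1 x.2.2.1 / T1 + dotp x.2.2.2 x.2.2.2 / Tn)
     - 2 * (d : ℝ) * al * ga) * f x

/-! ### Auxiliary derivative machinery -/

section AuxDeriv

variable {d n : ℕ}

lemma dotp_zero (a : Vec d) : dotp a 0 = 0 := by simp [dotp]

lemma dotp_single (a : Vec d) (j : Fin d) : dotp a (Pi.single j 1) = a j := by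
  simp [dotp, Pi.single_apply, mul_ite]

/-- The continuous linear map `v ↦ dotp a v`. -/
def dotCLM (a : Vec d) : Vec d →L[ℝ] ℝ := ∑ j, a j • ContinuousLinearMap.proj j

lemma dotCLM_apply (a v : Vec d) : dotCLM a v = dotp a v := by
  simp [dotCLM, dotp, ContinuousLinearMap.sum_apply]

lemma hasFDerivAt_halfSq (a : Vec d) :
    HasFDerivAt (fun b : Vec d => dotp b b / 2) (dotCLM a) a := by
  have h : ∀ j : Fin d, HasFDerivAt (fun b : Vec d => b j * b j / 2)
      (a j • (ContinuousLinearMap.proj j : Vec d →L[ℝ] ℝ)) a := by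
    intro j
    have h1 : HasFDerivAt (fun b : Vec d => b j)
        (ContinuousLinearMap.proj j : Vec d →L[ℝ] ℝ) a :=
      (ContinuousLinearMap.proj j : Vec d →L[ℝ] ℝ).hasFDerivAt
    have h2 : HasFDerivAt (fun b : Vec d => 1 / 2 * (b j * b j))
        ((1 / 2 : ℝ) • (a j • (ContinuousLinearMap.proj j : Vec d →L[ℝ] ℝ)
          + a j • (ContinuousLinearMap.proj j : Vec d →L[ℝ] ℝ))) a :=
      (h1.mul h1).const_mul (1 / 2)
    have hfun : (fun b : Vec d => b j * b j / 2)
        = fun b : Vec d => 1 / 2 * (b j * b j) := by funext b; ring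
    rw [hfun]
    convert h2 using 1
    ext v
    simp [ContinuousLinearMap.proj_apply]
    ring
  have hs := HasFDerivAt.fun_sum (fun j (_ : j ∈ Finset.univ) => h j)
  have hfun : (fun b : Vec d => dotp b b / 2)
      = fun b : Vec d => ∑ j, b j * b j / 2 := by
    funext b; simp [dotp, Finset.sum_div]
  rw [hfun, dotCLM]
  exact hs

/-- Projections of the phase space as continuous linear maps. -/
def ppCLM (d n : ℕ) : Phase d n →L[ℝ] (Fin n → Vec d) :=
  ContinuousLinearMap.fst ℝ _ _

def pqCLM (d n : ℕ) : Phase d n →L[ℝ] (Fin n → Vec d) :=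
  (ContinuousLinearMap.fst ℝ _ _).comp (ContinuousLinearMap.snd ℝ _ _)

def pr1CLM (d n : ℕ) : Phase d n →L[ℝ] Vec d :=
  (ContinuousLinearMap.fst ℝ _ _).comp
    ((ContinuousLinearMap.snd ℝ _ _).comp (ContinuousLinearMap.snd ℝ _ _))

def prnCLM (d n : ℕ) : Phase d n →L[ℝ] Vec d :=
  (ContinuousLinearMap.snd ℝ _ _).comp
    ((ContinuousLinearMap.snd ℝ _ _).comp (ContinuousLinearMap.snd ℝ _ _))

lemma ppCLM_apply (x : Phase d n) : ppCLM d n x = x.1 := rfl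
lemma pqCLM_apply (x : Phase d n) : pqCLM d n x = x.2.1 := rfl
lemma pr1CLM_apply (x : Phase d n) : pr1CLM d n x = x.2.2.1 := rfl
lemma prnCLM_apply (x : Phase d n) : prnCLM d n x = x.2.2.2 := rfl

lemma nth_in_range (v : Fin n → Vec d) {i : ℕ} (h : 1 ≤ i ∧ i ≤ n) :
    nth v i = v ⟨i - 1, by omega⟩ := dif_pos h

lemma nth_differentiable {i : ℕ} (h : 1 ≤ i ∧ i ≤ n) :
    Differentiable ℝ (fun v : Fin n → Vec d => nth v i) := by
  have hfun : (fun v : Fin n → Vec d => nth v i)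
      = fun v : Fin n → Vec d => v ⟨i - 1, by omega⟩ :=
    funext fun v => nth_in_range v h
  rw [hfun]
  exact (ContinuousLinearMap.proj (R := ℝ) (φ := fun _ : Fin n => Vec d)
    (⟨i - 1, by omega⟩ : Fin n)).differentiable

lemma vpot_differentiable {U1 U2 : Vec d → ℝ}
    (hU1 : ContDiff ℝ (⊤ : ℕ∞) U1) (hU2 : ContDiff ℝ (⊤ : ℕ∞) U2) :
    Differentiable ℝ (Vpot d n U1 U2) := by
  unfold Vpot
  apply Differentiable.add
  · apply Differentiable.fun_sum
    intro i hi
    rw [Finset.mem_Icc] at hi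
    exact (hU1.differentiable (by simp)).comp (nth_differentiable ⟨hi.1, hi.2⟩)
  · apply Differentiable.fun_sum
    intro i hi
    rw [Finset.mem_Icc] at hi
    have h1 : 1 ≤ i ∧ i ≤ n := ⟨hi.1, by omega⟩
    have h2 : 1 ≤ i + 1 ∧ i + 1 ≤ n := ⟨by omega, by omega⟩
    exact (hU2.differentiable (by simp)).comp
      ((nth_differentiable h1).sub (nth_differentiable h2))

/-- The derivative of `G` at `x`. -/
def DG (d n : ℕ) (U1 U2 : Vec d → ℝ) (x : Phase d n) : Phase d n →L[ℝ] ℝ :=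
  (dotCLM x.2.2.1).comp (pr1CLM d n) + (dotCLM x.2.2.2).comp (prnCLM d n)
  + (∑ i : Fin n, (dotCLM (x.1 i)).comp
      ((ContinuousLinearMap.proj i).comp (ppCLM d n)))
  + (fderiv ℝ (Vpot d n U1 U2) x.2.1).comp (pqCLM d n)

lemma DG_apply (U1 U2 : Vec d → ℝ) (x v : Phase d n) :
    DG d n U1 U2 x v =
      dotp x.2.2.1 v.2.2.1 + dotp x.2.2.2 v.2.2.2
      + (∑ i : Fin n, dotp (x.1 i) (v.1 i))
      + fderiv ℝ (Vpot d n U1 U2) x.2.1 v.2.1 := by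
  simp [DG, dotCLM_apply, pr1CLM_apply, prnCLM_apply, ppCLM_apply, pqCLM_apply,
    ContinuousLinearMap.sum_apply, ContinuousLinearMap.add_apply,
    ContinuousLinearMap.comp_apply]

lemma hasFDerivAt_Gfun {U1 U2 : Vec d → ℝ}
    (hU1 : ContDiff ℝ (⊤ : ℕ∞) U1) (hU2 : ContDiff ℝ (⊤ : ℕ∞) U2) (x : Phase d n) :
    HasFDerivAt (Gfun d n U1 U2) (DG d n U1 U2 x) x := by
  have t1 : HasFDerivAt (fun y : Phase d n => dotp y.2.2.1 y.2.2.1 / 2)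
      ((dotCLM x.2.2.1).comp (pr1CLM d n)) x := by
    have h := (hasFDerivAt_halfSq x.2.2.1).comp x (pr1CLM d n).hasFDerivAt; exact h
  have t2 : HasFDerivAt (fun y : Phase d n => dotp y.2.2.2 y.2.2.2 / 2)
      ((dotCLM x.2.2.2).comp (prnCLM d n)) x := by
    have h := (hasFDerivAt_halfSq x.2.2.2).comp x (prnCLM d n).hasFDerivAt; exact h
  have t3 : HasFDerivAt (fun y : Phase d n => ∑ i : Fin n, dotp (y.1 i) (y.1 i) / 2)
      (∑ i : Fin n, (dotCLM (x.1 i)).comp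
        ((ContinuousLinearMap.proj i).comp (ppCLM d n))) x := by
    have h := HasFDerivAt.fun_sum (u := Finset.univ) fun i _ =>
      (hasFDerivAt_halfSq (x.1 i)).comp x
        (((ContinuousLinearMap.proj i).comp (ppCLM d n)).hasFDerivAt); exact h
  have t4 : HasFDerivAt (fun y : Phase d n => Vpot d n U1 U2 y.2.1)
      ((fderiv ℝ (Vpot d n U1 U2) x.2.1).comp (pqCLM d n)) x := by
    have h := ((vpot_differentiable hU1 hU2 x.2.1).hasFDerivAt).comp x (pqCLM d n).hasFDerivAt; exact h
  exact ((t1.add t2).add t3).add t4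

lemma hasFDerivAt_expG {U1 U2 : Vec d → ℝ}
    (hU1 : ContDiff ℝ (⊤ : ℕ∞) U1) (hU2 : ContDiff ℝ (⊤ : ℕ∞) U2)
    (th : ℝ) (x : Phase d n) :
    HasFDerivAt (fun y : Phase d n => Real.exp (th * Gfun d n U1 U2 y))
      ((th * Real.exp (th * Gfun d n U1 U2 x)) • DG d n U1 U2 x) x := by
  have h := (((hasFDerivAt_Gfun hU1 hU2 x).const_mul th).exp :)
  have heq : Real.exp (th * Gfun d n U1 U2 x) • th • DG d n U1 U2 x
      = (th * Real.exp (th * Gfun d n U1 U2 x)) • DG d n U1 U2 x := by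
    rw [smul_smul, mul_comm]
  rw [heq] at h
  exact h

lemma pd_expG {U1 U2 : Vec d → ℝ}
    (hU1 : ContDiff ℝ (⊤ : ℕ∞) U1) (hU2 : ContDiff ℝ (⊤ : ℕ∞) U2)
    (th : ℝ) (v x : Phase d n) :
    pd (fun y : Phase d n => Real.exp (th * Gfun d n U1 U2 y)) v x
      = th * Real.exp (th * Gfun d n U1 U2 x) * DG d n U1 U2 x v := by
  rw [pd, (hasFDerivAt_expG hU1 hU2 th x).fderiv, ContinuousLinearMap.smul_apply,
    smul_eq_mul]

lemma sum_dotp_single (w : Fin n → Vec d) (k : Fin n) (j : Fin d) :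
    ∑ i' : Fin n, dotp (w i') ((Pi.single k (Pi.single j (1 : ℝ)) : Fin n → Vec d) i') = w k j := by
  rw [Finset.sum_eq_single k]
  · rw [Pi.single_eq_same, dotp_single]
  · intro b _ hb; rw [Pi.single_eq_of_ne hb, dotp_zero]
  · intro h; exact absurd (Finset.mem_univ k) h

lemma DG_eR1 (U1 U2 : Vec d → ℝ) (x : Phase d n) (j : Fin d) :
    DG d n U1 U2 x (eR1 d n j) = x.2.2.1 j := by
  rw [DG_apply]
  simp [eR1, dotp_single, dotp_zero]

lemma DG_eRn (U1 U2 : Vec d → ℝ) (x : Phase d n) (j : Fin d) :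
    DG d n U1 U2 x (eRn d n j) = x.2.2.2 j := by
  rw [DG_apply]
  simp [eRn, dotp_single, dotp_zero]

lemma DG_eP (U1 U2 : Vec d → ℝ) (x : Phase d n) {i : ℕ} (h : 1 ≤ i ∧ i ≤ n)
    (j : Fin d) :
    DG d n U1 U2 x (eP d n i j) = nth x.1 i j := by
  rw [DG_apply, nth_in_range x.1 h]
  simp only [eP, basisQ, dif_pos h]
  simp [dotp_zero, sum_dotp_single]

lemma DG_eQ (U1 U2 : Vec d → ℝ) (x : Phase d n) (i : ℕ) (j : Fin d) :
    DG d n U1 U2 x (eQ d n i j) = fderiv ℝ (Vpot d n U1 U2) x.2.1 (basisQ d n i j) := by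
  rw [DG_apply]
  simp [eQ, dotp_zero]

lemma pd2_eR1 {U1 U2 : Vec d → ℝ}
    (hU1 : ContDiff ℝ (⊤ : ℕ∞) U1) (hU2 : ContDiff ℝ (⊤ : ℕ∞) U2)
    (th : ℝ) (x : Phase d n) (j : Fin d) :
    pd2 (fun y : Phase d n => Real.exp (th * Gfun d n U1 U2 y)) (eR1 d n j) x
      = th * Real.exp (th * Gfun d n U1 U2 x)
        + th * th * Real.exp (th * Gfun d n U1 U2 x) * (x.2.2.1 j * x.2.2.1 j) := by
  rw [pd2]
  have hfun : (fun y : Phase d n =>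
      fderiv ℝ (fun y : Phase d n => Real.exp (th * Gfun d n U1 U2 y)) y (eR1 d n j))
      = fun y : Phase d n => (th * Real.exp (th * Gfun d n U1 U2 y)) * y.2.2.1 j := by
    funext y
    rw [(hasFDerivAt_expG hU1 hU2 th y).fderiv, ContinuousLinearMap.smul_apply,
      smul_eq_mul, DG_eR1]
  rw [hfun]
  have hA : HasFDerivAt (fun y : Phase d n => th * Real.exp (th * Gfun d n U1 U2 y))
      (th • ((th * Real.exp (th * Gfun d n U1 U2 x)) • DG d n U1 U2 x)) x :=
    (hasFDerivAt_expG hU1 hU2 th x).const_mul th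
  have hB : HasFDerivAt (fun y : Phase d n => y.2.2.1 j)
      ((ContinuousLinearMap.proj j).comp (pr1CLM d n)) x :=
    ((ContinuousLinearMap.proj j).comp (pr1CLM d n)).hasFDerivAt
  have hAB : HasFDerivAt
      (fun y : Phase d n => (th * Real.exp (th * Gfun d n U1 U2 y)) * y.2.2.1 j)
      ((th * Real.exp (th * Gfun d n U1 U2 x)) •
          ((ContinuousLinearMap.proj j).comp (pr1CLM d n))
        + x.2.2.1 j • (th • ((th * Real.exp (th * Gfun d n U1 U2 x)) • DG d n U1 U2 x)))
      x := hA.mul hB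
  rw [hAB.fderiv]
  simp only [ContinuousLinearMap.add_apply, ContinuousLinearMap.smul_apply,
    ContinuousLinearMap.comp_apply, smul_eq_mul, DG_eR1]
  have : (ContinuousLinearMap.proj j : Vec d →L[ℝ] ℝ) (pr1CLM d n (eR1 d n j)) = 1 := by
    simp [pr1CLM_apply, eR1]
  rw [this]
  ring

lemma pd2_eRn {U1 U2 : Vec d → ℝ}
    (hU1 : ContDiff ℝ (⊤ : ℕ∞) U1) (hU2 : ContDiff ℝ (⊤ : ℕ∞) U2)
    (th : ℝ) (x : Phase d n) (j : Fin d) :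
    pd2 (fun y : Phase d n => Real.exp (th * Gfun d n U1 U2 y)) (eRn d n j) x
      = th * Real.exp (th * Gfun d n U1 U2 x)
        + th * th * Real.exp (th * Gfun d n U1 U2 x) * (x.2.2.2 j * x.2.2.2 j) := by
  rw [pd2]
  have hfun : (fun y : Phase d n =>
      fderiv ℝ (fun y : Phase d n => Real.exp (th * Gfun d n U1 U2 y)) y (eRn d n j))
      = fun y : Phase d n => (th * Real.exp (th * Gfun d n U1 U2 y)) * y.2.2.2 j := by
    funext y
    rw [(hasFDerivAt_expG hU1 hU2 th y).fderiv, ContinuousLinearMap.smul_apply,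
      smul_eq_mul, DG_eRn]
  rw [hfun]
  have hA : HasFDerivAt (fun y : Phase d n => th * Real.exp (th * Gfun d n U1 U2 y))
      (th • ((th * Real.exp (th * Gfun d n U1 U2 x)) • DG d n U1 U2 x)) x :=
    (hasFDerivAt_expG hU1 hU2 th x).const_mul th
  have hB : HasFDerivAt (fun y : Phase d n => y.2.2.2 j)
      ((ContinuousLinearMap.proj j).comp (prnCLM d n)) x :=
    ((ContinuousLinearMap.proj j).comp (prnCLM d n)).hasFDerivAt
  have hAB : HasFDerivAt
      (fun y : Phase d n => (th * Real.exp (th * Gfun d n U1 U2 y)) * y.2.2.2 j)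
      ((th * Real.exp (th * Gfun d n U1 U2 x)) •
          ((ContinuousLinearMap.proj j).comp (prnCLM d n))
        + x.2.2.2 j • (th • ((th * Real.exp (th * Gfun d n U1 U2 x)) • DG d n U1 U2 x)))
      x := hA.mul hB
  rw [hAB.fderiv]
  simp only [ContinuousLinearMap.add_apply, ContinuousLinearMap.smul_apply,
    ContinuousLinearMap.comp_apply, smul_eq_mul, DG_eRn]
  have : (ContinuousLinearMap.proj j : Vec d →L[ℝ] ℝ) (prnCLM d n (eRn d n j)) = 1 := by
    simp [prnCLM_apply, eRn]
  rw [this]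
  ring

end AuxDeriv

/-- the exact identity for `L̄_α e^{θG}`. -/
theorem genBar_exp_energy
    (d n : ℕ) (hd : 1 ≤ d) (hn : 2 ≤ n)
    (U1 U2 : Vec d → ℝ) (hU1 : ContDiff ℝ (⊤ : ℕ∞) U1) (hU2 : ContDiff ℝ (⊤ : ℕ∞) U2)
    (ga lam T1 Tn : ℝ) (hga : 0 < ga) (hT1 : 0 < T1) (hTn : 0 < Tn)
    (al th : ℝ) :
    ∀ x : Phase d n,
      genBar d n U1 U2 ga lam T1 Tn al (fun y => Real.exp (th * Gfun d n U1 U2 y)) x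
      = ga * Real.exp (th * Gfun d n U1 U2 x) *
          ((d : ℝ) * (th * (T1 + Tn) + 2 * al)
            + (th ^ 2 * T1 - (1 - 2 * al) * th - al * (1 - al) / T1)
                * dotp x.2.2.1 x.2.2.1
            + (th ^ 2 * Tn - (1 - 2 * al) * th - al * (1 - al) / Tn)
                * dotp x.2.2.2 x.2.2.2) := by
  intro x
  set f : Phase d n → ℝ := fun y => Real.exp (th * Gfun d n U1 U2 y) with hf
  have hpdR1 : ∀ j, pd f (eR1 d n j) x
      = th * Real.exp (th * Gfun d n U1 U2 x) * x.2.2.1 j := fun j => by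
    rw [hf, pd_expG hU1 hU2, DG_eR1]
  have hpdRn : ∀ j, pd f (eRn d n j) x
      = th * Real.exp (th * Gfun d n U1 U2 x) * x.2.2.2 j := fun j => by
    rw [hf, pd_expG hU1 hU2, DG_eRn]
  have hpdP : ∀ i : ℕ, 1 ≤ i ∧ i ≤ n → ∀ j, pd f (eP d n i j) x
      = th * Real.exp (th * Gfun d n U1 U2 x) * nth x.1 i j := fun i hi j => by
    rw [hf, pd_expG hU1 hU2, DG_eP U1 U2 x hi]
  have hpdQ : ∀ (i : ℕ) (j : Fin d), pd f (eQ d n i j) x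
      = th * Real.exp (th * Gfun d n U1 U2 x)
          * fderiv ℝ (Vpot d n U1 U2) x.2.1 (basisQ d n i j) := fun i j => by
    rw [hf, pd_expG hU1 hU2, DG_eQ]
  have hs1 : ∑ j, pd2 f (eR1 d n j) x
      = (d : ℝ) * (th * Real.exp (th * Gfun d n U1 U2 x))
        + th * th * Real.exp (th * Gfun d n U1 U2 x) * dotp x.2.2.1 x.2.2.1 := by
    simp only [hf, pd2_eR1 hU1 hU2]
    rw [Finset.sum_add_distrib, Finset.sum_const, ← Finset.mul_sum]
    simp [dotp, nsmul_eq_mul]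
  have hs2 : ∑ j, pd2 f (eRn d n j) x
      = (d : ℝ) * (th * Real.exp (th * Gfun d n U1 U2 x))
        + th * th * Real.exp (th * Gfun d n U1 U2 x) * dotp x.2.2.2 x.2.2.2 := by
    simp only [hf, pd2_eRn hU1 hU2]
    rw [Finset.sum_add_distrib, Finset.sum_const, ← Finset.mul_sum]
    simp [dotp, nsmul_eq_mul]
  have hs3 : ∑ j, x.2.2.1 j * pd f (eR1 d n j) x
      = th * Real.exp (th * Gfun d n U1 U2 x) * dotp x.2.2.1 x.2.2.1 := by
    simp only [hpdR1]
    rw [Finset.sum_congr rfl (fun j _ => by ring :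
      ∀ j ∈ Finset.univ, x.2.2.1 j * (th * Real.exp (th * Gfun d n U1 U2 x) * x.2.2.1 j)
        = th * Real.exp (th * Gfun d n U1 U2 x) * (x.2.2.1 j * x.2.2.1 j)),
      ← Finset.mul_sum]
    rfl
  have hs4 : ∑ j, x.2.2.2 j * pd f (eRn d n j) x
      = th * Real.exp (th * Gfun d n U1 U2 x) * dotp x.2.2.2 x.2.2.2 := by
    simp only [hpdRn]
    rw [Finset.sum_congr rfl (fun j _ => by ring :
      ∀ j ∈ Finset.univ, x.2.2.2 j * (th * Real.exp (th * Gfun d n U1 U2 x) * x.2.2.2 j)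
        = th * Real.exp (th * Gfun d n U1 U2 x) * (x.2.2.2 j * x.2.2.2 j)),
      ← Finset.mul_sum]
    rfl
  have hs5 : ∑ j, nth x.1 1 j * pd f (eR1 d n j) x
      = th * Real.exp (th * Gfun d n U1 U2 x) * ∑ j, nth x.1 1 j * x.2.2.1 j := by
    simp only [hpdR1]
    rw [Finset.sum_congr rfl (fun j _ => by ring :
      ∀ j ∈ Finset.univ, nth x.1 1 j * (th * Real.exp (th * Gfun d n U1 U2 x) * x.2.2.1 j)
        = th * Real.exp (th * Gfun d n U1 U2 x) * (nth x.1 1 j * x.2.2.1 j)),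
      ← Finset.mul_sum]
  have hs6 : ∑ j, nth x.1 n j * pd f (eRn d n j) x
      = th * Real.exp (th * Gfun d n U1 U2 x) * ∑ j, nth x.1 n j * x.2.2.2 j := by
    simp only [hpdRn]
    rw [Finset.sum_congr rfl (fun j _ => by ring :
      ∀ j ∈ Finset.univ, nth x.1 n j * (th * Real.exp (th * Gfun d n U1 U2 x) * x.2.2.2 j)
        = th * Real.exp (th * Gfun d n U1 U2 x) * (nth x.1 n j * x.2.2.2 j)),
      ← Finset.mul_sum]
  have hs7 : ∑ j, x.2.2.1 j * pd f (eP d n 1 j) x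
      = th * Real.exp (th * Gfun d n U1 U2 x) * ∑ j, nth x.1 1 j * x.2.2.1 j := by
    simp only [hpdP 1 ⟨le_refl 1, by omega⟩]
    rw [Finset.sum_congr rfl (fun j _ => by ring :
      ∀ j ∈ Finset.univ, x.2.2.1 j * (th * Real.exp (th * Gfun d n U1 U2 x) * nth x.1 1 j)
        = th * Real.exp (th * Gfun d n U1 U2 x) * (nth x.1 1 j * x.2.2.1 j)),
      ← Finset.mul_sum]
  have hs8 : ∑ j, x.2.2.2 j * pd f (eP d n n j) x
      = th * Real.exp (th * Gfun d n U1 U2 x) * ∑ j, nth x.1 n j * x.2.2.2 j := by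
    simp only [hpdP n ⟨by omega, le_refl n⟩]
    rw [Finset.sum_congr rfl (fun j _ => by ring :
      ∀ j ∈ Finset.univ, x.2.2.2 j * (th * Real.exp (th * Gfun d n U1 U2 x) * nth x.1 n j)
        = th * Real.exp (th * Gfun d n U1 U2 x) * (nth x.1 n j * x.2.2.2 j)),
      ← Finset.mul_sum]
  have hs9 : ∑ i ∈ Finset.Icc 1 n, ∑ j, nth x.1 i j * pd f (eQ d n i j) x
      = th * Real.exp (th * Gfun d n U1 U2 x) *
        ∑ i ∈ Finset.Icc 1 n, ∑ j,
          nth x.1 i j * fderiv ℝ (Vpot d n U1 U2) x.2.1 (basisQ d n i j) := by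
    rw [Finset.sum_congr rfl (fun i hi => ?_), ← Finset.mul_sum]
    simp only [hpdQ]
    rw [Finset.sum_congr rfl (fun j _ => by ring :
      ∀ j ∈ Finset.univ, nth x.1 i j * (th * Real.exp (th * Gfun d n U1 U2 x)
          * fderiv ℝ (Vpot d n U1 U2) x.2.1 (basisQ d n i j))
        = th * Real.exp (th * Gfun d n U1 U2 x)
          * (nth x.1 i j * fderiv ℝ (Vpot d n U1 U2) x.2.1 (basisQ d n i j))),
      ← Finset.mul_sum]
  have hs10 : ∑ i ∈ Finset.Icc 1 n, ∑ j,
        fderiv ℝ (Vpot d n U1 U2) x.2.1 (basisQ d n i j) * pd f (eP d n i j) x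
      = th * Real.exp (th * Gfun d n U1 U2 x) *
        ∑ i ∈ Finset.Icc 1 n, ∑ j,
          nth x.1 i j * fderiv ℝ (Vpot d n U1 U2) x.2.1 (basisQ d n i j) := by
    rw [Finset.sum_congr rfl (fun i hi => ?_), ← Finset.mul_sum]
    rw [Finset.mem_Icc] at hi
    simp only [hpdP i ⟨hi.1, hi.2⟩]
    rw [Finset.sum_congr rfl (fun j _ => by ring :
      ∀ j ∈ Finset.univ, fderiv ℝ (Vpot d n U1 U2) x.2.1 (basisQ d n i j)
          * (th * Real.exp (th * Gfun d n U1 U2 x) * nth x.1 i j)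
        = th * Real.exp (th * Gfun d n U1 U2 x)
          * (nth x.1 i j * fderiv ℝ (Vpot d n U1 U2) x.2.1 (basisQ d n i j))),
      ← Finset.mul_sum]
  have hfx : f x = Real.exp (th * Gfun d n U1 U2 x) := rfl
  simp only [genBar, genTilde, gen, gen0, gen1]
  rw [hs1, hs2, hs3, hs4, hs5, hs6, hs7, hs8, hs9, hs10, hfx]
  ring
end EP
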